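/- arXiv:1904.10345 — 2 statements merged into one kernel-verified Lean document; each statement's English description precedes it below -/
import Mathlib

section
/- Under conditional independence of T and C given W and the positivity assumption, the conditional expectation satisfies E[Δ/G_0(T̃|W) | T, W] = 1 almost surely, where T̃ = min(T,C), Δ = 1{T ≤ C}, and G_0(u|w) = P(C > u | W = w). -/
/-!
Given `(W, T)`, conditional independence makes `C` distributed according to its conditional law
`κ_W` given `W` alone, so `E[1{T ≤ C} | T, W] = κ_W([T, ∞))`. Almost surely
`κ_W((q, ∞)) = G₀(q | W)` for all rationals `q` at once, and letting rationals increase to `T`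
turns this, by continuity of `G₀` in `u`, into `κ_W([T, ∞)) = G₀(T | W)`. On `{T ≤ C}` we have
`T̃ = T`, so the weight is `1{T ≤ C} / G₀(T | W)`, and its `(T, W)`-measurable factor
`1 / G₀(T | W) ≤ 1 / ε` comes out of the conditional expectation.
-/

open MeasureTheory ProbabilityTheory Filter Set Topology

theorem MeasurableSpace.comap_prodMk_swap {α β γ : Type*} [MeasurableSpace β] [MeasurableSpace γ]
    (f : α → β) (g : α → γ) :
    MeasurableSpace.comap (fun a => (f a, g a)) inferInstance
      = MeasurableSpace.comap (fun a => (g a, f a)) inferInstance :=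
  (MeasurableSpace.comap_prodMk f g).trans
    ((sup_comm _ _).trans (MeasurableSpace.comap_prodMk g f).symm)

theorem measureReal_Ici_eq_of_measureReal_Ioi_rat_eq {ν : Measure ℝ} [IsFiniteMeasure ν]
    {g : ℝ → ℝ} (hg : Continuous g) (hν : ∀ q : ℚ, ν.real (Ioi (q : ℝ)) = g q) (t : ℝ) :
    ν.real (Ici t) = g t := by
  obtain ⟨q, hq_mono, hq_lt, hq_lim⟩ := Real.exists_seq_rat_strictMono_tendsto t
  have hIci : ⋂ n, Ioi (q n : ℝ) = Ici t := by
    ext x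
    simp only [mem_iInter, mem_Ioi, mem_Ici]
    exact ⟨fun h => le_of_tendsto' hq_lim fun n => (h n).le,
      fun h n => (hq_lt n).trans_le h⟩
  have hν_lim : Tendsto (fun n => ν.real (Ioi (q n : ℝ))) atTop (𝓝 (ν.real (Ici t))) := by
    rw [← hIci]
    refine (ENNReal.tendsto_toReal (measure_ne_top ν _)).comp
      (tendsto_measure_iInter_atTop (fun n => measurableSet_Ioi.nullMeasurableSet)
        (fun m n hmn => Ioi_subset_Ioi ?_) ⟨0, measure_ne_top ν _⟩)
    exact_mod_cast hq_mono.monotone hmn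
  simp_rw [hν] at hν_lim
  exact tendsto_nhds_unique hν_lim ((hg.tendsto t).comp hq_lim)

section

variable {Ω 𝓦 β : Type*} [MeasurableSpace Ω] [MeasurableSpace 𝓦] [MeasurableSpace β]
  {μ : Measure Ω} [IsFiniteMeasure μ] {C : Ω → ℝ} {W : Ω → 𝓦}

theorem condDistrib_prodMk_ae_eq_of_condIndepFun [StandardBorelSpace Ω]
    [StandardBorelSpace β] [Nonempty β] {T : Ω → β} (hT : Measurable T) (hC : Measurable C)
    (hW : Measurable W) (hindep : T ⟂ᵢ[W, hW; μ] C) :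
    ∀ᵐ ω ∂μ, condDistrib C (fun ω => (W ω, T ω)) μ (W ω, T ω) = condDistrib C W μ (W ω) :=
  ae_of_ae_map (hW.prodMk hT).aemeasurable
    ((condIndepFun_iff_condDistrib_prod_ae_eq_prodMkRight hC hT hW).mp hindep)

theorem integrable_ite_le {T : Ω → ℝ} (hT : Measurable T) (hC : Measurable C) :
    Integrable (fun ω => if T ω ≤ C ω then (1 : ℝ) else 0) μ :=
  (integrable_const 1).mono'
    (Measurable.ite (measurableSet_le hT hC) measurable_const measurable_const).aestronglyMeasurable
    (Eventually.of_forall fun ω => by split_ifs <;> simp)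

theorem condExp_ae_eq_integral_condDistrib_of_condIndepFun {F : Type*} [NormedAddCommGroup F]
    [NormedSpace ℝ F] [CompleteSpace F] [StandardBorelSpace Ω] [StandardBorelSpace β] [Nonempty β]
    {T : Ω → β} {φ : (𝓦 × β) × ℝ → F}
    (hT : Measurable T) (hC : Measurable C) (hW : Measurable W) (hindep : T ⟂ᵢ[W, hW; μ] C)
    (hφ : StronglyMeasurable φ) (hφ_int : Integrable (fun ω => φ ((W ω, T ω), C ω)) μ) :
    μ[fun ω => φ ((W ω, T ω), C ω) | MeasurableSpace.comap (fun ω => (W ω, T ω)) inferInstance]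
      =ᵐ[μ] fun ω => ∫ c, φ ((W ω, T ω), c) ∂condDistrib C W μ (W ω) := by
  filter_upwards [condExp_prod_ae_eq_integral_condDistrib (hW.prodMk hT) hC.aemeasurable hφ hφ_int,
    condDistrib_prodMk_ae_eq_of_condIndepFun hT hC hW hindep] with ω hω hκ
  rw [hω, hκ]

theorem condExp_ite_le_ae_eq_condDistrib_Ici [StandardBorelSpace Ω] {T : Ω → ℝ}
    (hT : Measurable T) (hC : Measurable C) (hW : Measurable W) (hindep : T ⟂ᵢ[W, hW; μ] C) :
    μ[fun ω => if T ω ≤ C ω then (1 : ℝ) else 0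
        | MeasurableSpace.comap (fun ω => (T ω, W ω)) inferInstance]
      =ᵐ[μ] fun ω => (condDistrib C W μ (W ω)).real (Ici (T ω)) := by
  have hφ : StronglyMeasurable fun x : (𝓦 × ℝ) × ℝ => if x.1.2 ≤ x.2 then (1 : ℝ) else 0 :=
    (Measurable.ite (measurableSet_le (measurable_snd.comp measurable_fst) measurable_snd)
      measurable_const measurable_const).stronglyMeasurable
  rw [MeasurableSpace.comap_prodMk_swap]
  filter_upwards [condExp_ae_eq_integral_condDistrib_of_condIndepFun hT hC hW hindep hφ
    (integrable_ite_le hT hC)] with ω hω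
  rw [hω, ← integral_indicator_one measurableSet_Ici]
  rfl

theorem ae_condDistrib_Ioi_rat_eq {G₀ : ℝ → 𝓦 → ℝ} (hC : Measurable C) (hW : Measurable W)
    (hG₀ : ∀ u : ℝ, (fun ω => G₀ u (W ω)) =ᵐ[μ]
        μ[(fun ω => if u < C ω then (1:ℝ) else 0) | MeasurableSpace.comap W inferInstance]) :
    ∀ᵐ ω ∂μ, ∀ q : ℚ, (condDistrib C W μ (W ω)).real (Ioi (q : ℝ)) = G₀ q (W ω) := by
  refine ae_all_iff.mpr fun q => ?_
  filter_upwards [condDistrib_ae_eq_condExp hW hC (measurableSet_Ioi (a := (q : ℝ))), hG₀ q]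
    with ω hκ hG
  rw [hκ, hG]
  rfl

theorem condExp_ite_le_ae_eq [StandardBorelSpace Ω] {T : Ω → ℝ} {G₀ : ℝ → 𝓦 → ℝ}
    (hT : Measurable T) (hC : Measurable C) (hW : Measurable W) (hindep : T ⟂ᵢ[W, hW; μ] C)
    (hG₀cont : ∀ w, Continuous fun u => G₀ u w)
    (hG₀ : ∀ u : ℝ, (fun ω => G₀ u (W ω)) =ᵐ[μ]
        μ[(fun ω => if u < C ω then (1:ℝ) else 0) | MeasurableSpace.comap W inferInstance]) :
    μ[fun ω => if T ω ≤ C ω then (1 : ℝ) else 0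
        | MeasurableSpace.comap (fun ω => (T ω, W ω)) inferInstance]
      =ᵐ[μ] fun ω => G₀ (T ω) (W ω) := by
  filter_upwards [condExp_ite_le_ae_eq_condDistrib_Ici hT hC hW hindep,
    ae_condDistrib_Ioi_rat_eq hC hW hG₀] with ω hκ hG
  rw [hκ]
  exact measureReal_Ici_eq_of_measureReal_Ioi_rat_eq (hG₀cont (W ω)) hG (T ω)

end

theorem ipcw_condexp_one_general
    {Ω 𝓦 : Type*} [MeasurableSpace Ω] [StandardBorelSpace Ω]
    [MeasurableSpace 𝓦]
    (μ : Measure Ω) [IsProbabilityMeasure μ]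
    (T C : Ω → ℝ) (W : Ω → 𝓦)
    (hT : Measurable T) (hC : Measurable C)
    (hWle : MeasurableSpace.comap W inferInstance ≤ (inferInstance : MeasurableSpace Ω))
    (hindep : CondIndepFun (MeasurableSpace.comap W inferInstance) hWle T C μ)
    (G₀ : ℝ → 𝓦 → ℝ)
    (hG₀meas : Measurable (Function.uncurry G₀))
    (hG₀cont : ∀ w, Continuous fun u => G₀ u w)
    (hG₀ : ∀ u : ℝ,
      (fun ω => G₀ u (W ω)) =ᵐ[μ]
        μ[(fun ω => if u < C ω then (1:ℝ) else 0) | MeasurableSpace.comap W inferInstance])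
    (ε : ℝ) (hε : 0 < ε) (hpos : ∀ᵐ ω ∂μ, ε ≤ G₀ (T ω) (W ω)) :
    μ[(fun ω => (if T ω ≤ C ω then (1:ℝ) else 0) / G₀ (min (T ω) (C ω)) (W ω))
        | MeasurableSpace.comap (fun ω => (T ω, W ω)) inferInstance]
      =ᵐ[μ] fun _ => (1 : ℝ) := by
  have hW : Measurable W := measurable_iff_comap_le.mpr hWle
  have hweight : (fun ω => (if T ω ≤ C ω then (1:ℝ) else 0) / G₀ (min (T ω) (C ω)) (W ω))
      = (fun ω => (G₀ (T ω) (W ω))⁻¹) * fun ω => if T ω ≤ C ω then (1:ℝ) else 0 := by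
    ext ω
    by_cases h : T ω ≤ C ω <;> simp [h]
  have hinv_meas : StronglyMeasurable[MeasurableSpace.comap (fun ω => (T ω, W ω)) inferInstance]
      fun ω => (G₀ (T ω) (W ω))⁻¹ :=
    (hG₀meas.inv.comp (Measurable.of_comap_le le_rfl)).stronglyMeasurable
  have hinv_bound : ∀ᵐ ω ∂μ, ‖(G₀ (T ω) (W ω))⁻¹‖ ≤ ε⁻¹ := by
    filter_upwards [hpos] with ω hω
    rw [norm_inv, Real.norm_of_nonneg (hε.le.trans hω)]
    exact inv_anti₀ hε hω
  rw [hweight]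
  filter_upwards [condExp_stronglyMeasurable_mul_of_bound (hT.prodMk hW).comap_le hinv_meas
      (integrable_ite_le hT hC) ε⁻¹ hinv_bound,
    condExp_ite_le_ae_eq hT hC hW hindep hG₀cont hG₀, hpos] with ω hpull hcond hω
  rw [hpull, Pi.mul_apply, hcond]
  exact inv_mul_cancel₀ (hε.trans_le hω).ne'

/-- `E[Δ/G₀(T̃|W) | T, W] = 1` a.s. -/
theorem ipcw_condexp_one
    {Ω 𝓦 : Type*} [MeasurableSpace Ω] [StandardBorelSpace Ω] [Nonempty Ω]
    [MeasurableSpace 𝓦]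
    (μ : Measure Ω) [IsProbabilityMeasure μ]
    (T C : Ω → ℝ) (W : Ω → 𝓦)
    (hT : Measurable T) (hC : Measurable C) (hW : Measurable W)
    (hWle : MeasurableSpace.comap W inferInstance ≤ (inferInstance : MeasurableSpace Ω))
    (hTWle : MeasurableSpace.comap (fun ω => (T ω, W ω)) inferInstance
        ≤ (inferInstance : MeasurableSpace Ω))
    (hTpos : ∀ ω, 0 < T ω) (hCpos : ∀ ω, 0 < C ω)
    (hindep : CondIndepFun (MeasurableSpace.comap W inferInstance) hWle T C μ)
    (G₀ : ℝ → 𝓦 → ℝ)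
    (hG₀meas : Measurable (Function.uncurry G₀))
    (hG₀cont : ∀ w, Continuous fun u => G₀ u w)
    (hG₀ : ∀ u : ℝ,
      (fun ω => G₀ u (W ω)) =ᵐ[μ]
        μ[(fun ω => if u < C ω then (1:ℝ) else 0) | MeasurableSpace.comap W inferInstance])
    (ε : ℝ) (hε : 0 < ε) (hpos : ∀ᵐ ω ∂μ, ε ≤ G₀ (T ω) (W ω)) :
    μ[(fun ω => (if T ω ≤ C ω then (1:ℝ) else 0) / G₀ (min (T ω) (C ω)) (W ω))
        | MeasurableSpace.comap (fun ω => (T ω, W ω)) inferInstance]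
      =ᵐ[μ] fun _ => (1 : ℝ) :=
  ipcw_condexp_one_general μ T C W hT hC hWle hindep G₀ hG₀meas hG₀cont hG₀ ε hε hpos
end

section
/- IPCW unbiasedness for the Brier loss at the truncated timescale: under T ⊥ C | W, continuity of G_0, and positivity G_0(min(T,t)|W) ≥ ε > 0, E[ Δ(t)·(1{T̃ ≥ t} - β(W))^2 / G_0(T̃(t)|W) ] = E[(1{T ≥ t} - β(W))^2], where T̃(t) = min(T,C,t) and Δ(t) = 1{min(T,t) ≤ C}. -/
/-!
Conditional independence of `T` and `C` given `W` disintegrates the law of `((W, T), C)` as the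
law of `(W, T)` followed by the conditional law of `C` given `W` alone. On `{min T t ≤ C}` the
censored Brier term coincides with the uncensored one, so integrating out `C` turns the indicator
`Δ(t)` into `P(C ≥ min T t | W)`. By continuity of `G₀` the conditional law of `C` has no atoms,
so this probability is `G₀ (min T t) W`, which cancels the weight.
-/

open MeasureTheory ProbabilityTheory Set

theorem integral_eq_integral_condDistrib_of_condIndepFun
    {Ω α β γ : Type*} [MeasurableSpace Ω] [StandardBorelSpace Ω] [MeasurableSpace α]
    [MeasurableSpace β] [StandardBorelSpace β] [Nonempty β]
    [MeasurableSpace γ] [StandardBorelSpace γ] [Nonempty γ]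
    {μ : Measure Ω} [IsFiniteMeasure μ] {X : Ω → α} {Y : Ω → β} {Z : Ω → γ}
    (hX : Measurable X) (hY : Measurable Y) (hZ : Measurable Z) (hindep : Y ⟂ᵢ[X, hX; μ] Z)
    {f : α → β → γ → ℝ}
    (hf : Integrable (fun p ↦ f p.1.1 p.1.2 p.2) (μ.map fun ω ↦ ((X ω, Y ω), Z ω))) :
    ∫ ω, f (X ω) (Y ω) (Z ω) ∂μ = ∫ ω, ∫ z, f (X ω) (Y ω) z ∂(condDistrib Z X μ (X ω)) ∂μ := by
  have hlaw : μ.map (fun ω ↦ ((X ω, Y ω), Z ω))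
      = μ.map (fun ω ↦ (X ω, Y ω)) ⊗ₘ (condDistrib Z X μ).prodMkRight β := by
    rw [← Measure.compProd_congr
        ((condIndepFun_iff_condDistrib_prod_ae_eq_prodMkRight hZ hY hX).mp hindep),
      compProd_map_condDistrib hZ.aemeasurable]
  rw [← integral_map (by fun_prop) hf.aestronglyMeasurable, hlaw]
  rw [hlaw] at hf
  rw [Measure.integral_compProd hf, integral_map (by fun_prop)]
  · simp only [Kernel.prodMkRight_apply]
  · exact hf.aestronglyMeasurable.integral_kernel_compProd

theorem measureReal_Ici_eq_of_forall_ratCast {ν : Measure ℝ} [IsFiniteMeasure ν] {g : ℝ → ℝ}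
    (hg : Continuous g) (hν : ∀ q : ℚ, ν.real (Ioi (q : ℝ)) = g q) (u : ℝ) :
    ν.real (Ici u) = g u := by
  refine eq_of_forall_dist_le fun δ hδ ↦ ?_
  obtain ⟨η, hη, hgη⟩ := Metric.continuous_iff.mp hg u δ hδ
  obtain ⟨q, hq⟩ := exists_rat_btwn (sub_lt_self u hη)
  obtain ⟨q', hq'⟩ := exists_rat_btwn (lt_add_of_pos_right u hη)
  have hq_le : ν.real (Ici u) ≤ g q := hν q ▸ measureReal_mono (Ici_subset_Ioi.mpr hq.2)
  have hq'_le : g q' ≤ ν.real (Ici u) := hν q' ▸ measureReal_mono (Ioi_subset_Ici hq'.1.le)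
  have hq_close := hgη q (by rw [Real.dist_eq, abs_lt]; constructor <;> linarith)
  have hq'_close := hgη q' (by rw [Real.dist_eq, abs_lt]; constructor <;> linarith)
  rw [Real.dist_eq, abs_lt] at hq_close hq'_close
  rw [Real.dist_eq, abs_le]
  constructor <;> linarith

theorem ae_forall_condDistrib_real_Ici_eq
    {Ω α : Type*} [MeasurableSpace Ω] [MeasurableSpace α]
    {μ : Measure Ω} [IsFiniteMeasure μ] {X : Ω → α} {Y : Ω → ℝ}
    (hX : Measurable X) (hY : Measurable Y) {S : ℝ → α → ℝ} (hS_cont : ∀ a, Continuous (S · a))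
    (hS : ∀ u, (fun ω ↦ S u (X ω)) =ᵐ[μ]
      μ[fun ω ↦ if u < Y ω then (1 : ℝ) else 0 | MeasurableSpace.comap X inferInstance]) :
    ∀ᵐ ω ∂μ, ∀ u, (condDistrib Y X μ (X ω)).real (Ici u) = S u (X ω) := by
  have hrat : ∀ᵐ ω ∂μ, ∀ q : ℚ, (condDistrib Y X μ (X ω)).real (Ioi (q : ℝ)) = S q (X ω) := by
    refine ae_all_iff.mpr fun q ↦ ?_
    filter_upwards [condDistrib_ae_eq_condExp hX hY measurableSet_Ioi, hS q] with ω hcd hSω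
    rw [hcd, hSω]
    rfl
  filter_upwards [hrat] with ω hω u
  exact measureReal_Ici_eq_of_forall_ratCast (hS_cont (X ω)) hω u

theorem integral_ite_le_const (ν : Measure ℝ) (u a : ℝ) [DecidablePred (u ≤ ·)] :
    ∫ c, (if u ≤ c then a else 0) ∂ν = ν.real (Ici u) * a := by
  rw [← smul_eq_mul, ← integral_indicator_const a measurableSet_Ici]
  congr with c
  simp [indicator_apply]

section ipcwBrierTerm

variable {𝓦 : Type*} (t : ℝ) (β : 𝓦 → ℝ) (G : ℝ → 𝓦 → ℝ)

/-- `Δ(t) (1{T̃ ≥ t} - β W)² / G₀(T̃(t) | W)` at `(W, T, C) = (w, x, c)`, using that on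
`{Δ(t) = 1}` one has `T̃(t) = min x t` and `1{T̃ ≥ t} = 1{x ≥ t}`. -/
noncomputable def ipcwBrierTerm (w : 𝓦) (x c : ℝ) : ℝ :=
  if min x t ≤ c then ((if t ≤ x then (1 : ℝ) else 0) - β w) ^ 2 / G (min x t) w else 0

theorem ite_mul_sq_div_eq_ipcwBrierTerm (w : 𝓦) (x c : ℝ) :
    (if min x t ≤ c then (1 : ℝ) else 0) * ((if t ≤ min x c then (1 : ℝ) else 0) - β w) ^ 2
        / G (min (min x c) t) w = ipcwBrierTerm t β G w x c := by
  unfold ipcwBrierTerm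
  by_cases hxt : min x t ≤ c
  · have hmin : min (min x c) t = min x t := by grind
    have hiff : t ≤ min x c ↔ t ≤ x := by grind
    rw [if_pos hxt, if_pos hxt, hmin, if_congr hiff rfl rfl, one_mul]
  · simp [hxt]

variable {t β G}

theorem measurable_ipcwBrierTerm [MeasurableSpace 𝓦] (hβ : Measurable β)
    (hG : Measurable (Function.uncurry G)) :
    Measurable fun p : (𝓦 × ℝ) × ℝ ↦ ipcwBrierTerm t β G p.1.1 p.1.2 p.2 := by
  refine Measurable.ite (measurableSet_le (by fun_prop) (by fun_prop)) ?_ measurable_const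
  refine ((Measurable.ite (measurableSet_le (by fun_prop) (by fun_prop)) measurable_const
    measurable_const).sub (hβ.comp (by fun_prop))).pow_const 2 |>.div ?_
  exact hG.comp (by fun_prop : Measurable fun p : (𝓦 × ℝ) × ℝ ↦ (min p.1.2 t, p.1.1))

theorem norm_ipcwBrierTerm_le {M ε : ℝ} (hβ : ∀ w, |β w| ≤ M) (hε : 0 < ε) {w : 𝓦} {x : ℝ}
    (hG : ε ≤ G (min x t) w) (c : ℝ) : ‖ipcwBrierTerm t β G w x c‖ ≤ (1 + M) ^ 2 / ε := by
  have hsq : ((if t ≤ x then (1 : ℝ) else 0) - β w) ^ 2 ≤ (1 + M) ^ 2 := by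
    refine sq_le_sq' ?_ ?_ <;> have := abs_le.mp (hβ w) <;> split_ifs <;> linarith
  by_cases hxt : min x t ≤ c
  · rw [ipcwBrierTerm, if_pos hxt, Real.norm_eq_abs, abs_div, abs_of_nonneg (sq_nonneg _),
      abs_of_pos (hε.trans_le hG)]
    exact div_le_div₀ (sq_nonneg _) hsq hε hG
  · rw [ipcwBrierTerm, if_neg hxt, norm_zero]
    positivity

end ipcwBrierTerm

theorem ipcw_brier_unbiased_general
    {Ω 𝓦 : Type*} [MeasurableSpace Ω] [StandardBorelSpace Ω]
    [MeasurableSpace 𝓦]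
    (μ : Measure Ω) [IsProbabilityMeasure μ]
    (T C : Ω → ℝ) (W : Ω → 𝓦)
    (hT : Measurable T) (hC : Measurable C) (hW : Measurable W)
    (hWle : MeasurableSpace.comap W inferInstance ≤ (inferInstance : MeasurableSpace Ω))
    (hindep : CondIndepFun (MeasurableSpace.comap W inferInstance) hWle T C μ)
    (t : ℝ)
    -- G₀(u|w) = P(C > u | W = w), continuous
    (G₀ : ℝ → 𝓦 → ℝ) (hG₀meas : Measurable (Function.uncurry G₀))
    (hG₀cont : ∀ w, Continuous fun u => G₀ u w)
    (hG₀ : ∀ u : ℝ,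
      (fun ω => G₀ u (W ω)) =ᵐ[μ]
        μ[(fun ω => if u < C ω then (1:ℝ) else 0) | MeasurableSpace.comap W inferInstance])
    -- positivity on the truncated timescale
    (ε : ℝ) (hε : 0 < ε) (hpos : ∀ᵐ ω ∂μ, ε ≤ G₀ (min (T ω) t) (W ω))
    -- bounded measurable prediction
    (β : 𝓦 → ℝ) (hβ : Measurable β) (M : ℝ) (hβbd : ∀ w, |β w| ≤ M) :
    ∫ ω, (if min (T ω) t ≤ C ω then (1:ℝ) else 0)
        * ((if t ≤ min (T ω) (C ω) then (1:ℝ) else 0) - β (W ω))^2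
        / G₀ (min (min (T ω) (C ω)) t) (W ω) ∂μ
      = ∫ ω, ((if t ≤ T ω then (1:ℝ) else 0) - β (W ω))^2 ∂μ := by
  have hF_meas := measurable_ipcwBrierTerm (t := t) hβ hG₀meas
  have hF_int : Integrable (fun p ↦ ipcwBrierTerm t β G₀ p.1.1 p.1.2 p.2)
      (μ.map fun ω ↦ ((W ω, T ω), C ω)) := by
    refine (integrable_map_measure hF_meas.aestronglyMeasurable (by fun_prop)).mpr <|
      .of_bound (hF_meas.comp (by fun_prop)).aestronglyMeasurable ((1 + M) ^ 2 / ε) ?_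
    filter_upwards [hpos] with ω hω using norm_ipcwBrierTerm_le hβbd hε hω (C ω)
  calc _ = ∫ ω, ipcwBrierTerm t β G₀ (W ω) (T ω) (C ω) ∂μ := by
        simp only [ite_mul_sq_div_eq_ipcwBrierTerm]
    _ = ∫ ω, ∫ c, ipcwBrierTerm t β G₀ (W ω) (T ω) c ∂(condDistrib C W μ (W ω)) ∂μ :=
      integral_eq_integral_condDistrib_of_condIndepFun hW hT hC hindep hF_int
    _ = _ := by
      refine integral_congr_ae ?_
      filter_upwards [ae_forall_condDistrib_real_Ici_eq hW hC hG₀cont hG₀, hpos] with ω hsurv hω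
      unfold ipcwBrierTerm
      rw [integral_ite_le_const, hsurv]
      exact mul_div_cancel₀ _ (hε.trans_le hω).ne'

/-- IPCW unbiasedness for the Brier loss on the truncated timescale. -/
theorem ipcw_brier_unbiased
    {Ω 𝓦 : Type*} [MeasurableSpace Ω] [StandardBorelSpace Ω] [Nonempty Ω]
    [MeasurableSpace 𝓦]
    (μ : Measure Ω) [IsProbabilityMeasure μ]
    (T C : Ω → ℝ) (W : Ω → 𝓦)
    (hT : Measurable T) (hC : Measurable C) (hW : Measurable W)
    (hWle : MeasurableSpace.comap W inferInstance ≤ (inferInstance : MeasurableSpace Ω))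
    (hTpos : ∀ ω, 0 < T ω) (hCpos : ∀ ω, 0 < C ω)
    (hindep : CondIndepFun (MeasurableSpace.comap W inferInstance) hWle T C μ)
    (t : ℝ) (ht : 0 < t)
    -- G₀(u|w) = P(C > u | W = w), continuous
    (G₀ : ℝ → 𝓦 → ℝ) (hG₀meas : Measurable (Function.uncurry G₀))
    (hG₀cont : ∀ w, Continuous fun u => G₀ u w)
    (hG₀ : ∀ u : ℝ,
      (fun ω => G₀ u (W ω)) =ᵐ[μ]
        μ[(fun ω => if u < C ω then (1:ℝ) else 0) | MeasurableSpace.comap W inferInstance])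
    -- positivity on the truncated timescale
    (ε : ℝ) (hε : 0 < ε) (hpos : ∀ᵐ ω ∂μ, ε ≤ G₀ (min (T ω) t) (W ω))
    -- bounded measurable prediction
    (β : 𝓦 → ℝ) (hβ : Measurable β) (M : ℝ) (hβbd : ∀ w, |β w| ≤ M) :
    ∫ ω, (if min (T ω) t ≤ C ω then (1:ℝ) else 0)
        * ((if t ≤ min (T ω) (C ω) then (1:ℝ) else 0) - β (W ω))^2
        / G₀ (min (min (T ω) (C ω)) t) (W ω) ∂μ
      = ∫ ω, ((if t ≤ T ω then (1:ℝ) else 0) - β (W ω))^2 ∂μ :=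
  ipcw_brier_unbiased_general μ T C W hT hC hW hWle hindep t G₀ hG₀meas hG₀cont hG₀ ε hε hpos β hβ M
    hβbd
end
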